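/- arXiv:1509.04112 — 4 statements merged into one kernel-verified Lean document; each statement's English description precedes it below -/
import Mathlib

section
/- Let F be a field and X a nonempty set. An element a ∈ F[X] belongs to the set K·Mon = {α·w : α ∈ F, w a monomial in the variables X} if and only if every non-invertible divisor of a is divisible by some variable x ∈ X. (For finite X this characterizes scalar multiples of monomials.) -/
/-!
A divisor of `u • X^d` with `u` a unit is again of this form, and it is a unit exactly when
`d = 0`. Conversely, if every non-unit divisor of `a ≠ 0` is divisible by a variable, split off
one variable `a = X x * c` at a time: strict divisibility is well founded in the unique
factorization domain `F[X]`, so this ends at a unit, which is a constant. The hypothesis rules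
out `a = 0`, because `X x + 1` is a non-unit divisor of `0` that no variable divides.
-/

namespace MvPolynomial

variable {R σ : Type*} [CommRing R]

theorem exists_X_dvd_of_dvd_monomial [IsDomain R] {b : MvPolynomial σ R} {d : σ →₀ ℕ}
    {u : R} (hu : IsUnit u) (hb : b ∣ monomial d u) (hb' : ¬IsUnit b) :
    ∃ x, X x ∣ b := by
  obtain ⟨m, β, -, hβ, rfl⟩ := (dvd_monomial_iff_exists hu.ne_zero).mp hb
  obtain ⟨x, hx⟩ : ∃ x, m x ≠ 0 := by
    by_contra! hm
    rw [show m = 0 from Finsupp.ext hm, monomial_zero'] at hb'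
    exact hb' ((isUnit_of_dvd_unit hβ hu).map C)
  exact ⟨x, X_dvd_monomial.mpr (Or.inr hx)⟩

theorem not_isUnit_X_add_one [Nontrivial R] (x : σ) : ¬IsUnit (X x + 1 : MvPolynomial σ R) := by
  intro h
  simpa using h.map (eval fun _ => (-1 : R))

theorem not_X_dvd_X_add_one [Nontrivial R] (x y : σ) : ¬X y ∣ (X x + 1 : MvPolynomial σ R) := by
  rintro ⟨q, hq⟩
  simpa using congrArg constantCoeff hq

theorem exists_monomial_of_forall_X_dvd [IsDomain R] [UniqueFactorizationMonoid R]
    {a : MvPolynomial σ R} (ha : a ≠ 0)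
    (H : ∀ b, b ∣ a → ¬IsUnit b → ∃ x, X x ∣ b) :
    ∃ u d, IsUnit u ∧ a = monomial d u := by
  induction a using (wellFounded_dvdNotUnit (α := MvPolynomial σ R)).induction with
  | h a ih =>
    by_cases hunit : IsUnit a
    · obtain ⟨u, hu, rfl⟩ := isUnit_iff_eq_C_of_isReduced.mp hunit
      exact ⟨u, 0, hu, by rw [monomial_zero']⟩
    obtain ⟨x, c, rfl⟩ := H a dvd_rfl hunit
    have hc : c ≠ 0 := right_ne_zero_of_mul ha
    obtain ⟨u, d, hu, rfl⟩ := ih c ⟨hc, X x, X_prime.not_isUnit, mul_comm _ _⟩ hc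
      fun b hb => H b (hb.trans (dvd_mul_left _ _))
    exact ⟨u, Finsupp.single x 1 + d, hu, by rw [X, monomial_mul, one_mul]⟩

end MvPolynomial

open MvPolynomial in
/-- In `F[X]` (`F` a field, `X` nonempty), an element `a` is a nonzero scalar multiple of a
monomial in the variables `X` if and only if every non-invertible divisor of `a` is
divisible by some variable `x ∈ X`. -/
theorem scalar_monomial_iff_divisors {F σ : Type*} [Field F] [Nonempty σ]
    (a : MvPolynomial σ F) :
    (∃ (α : F) (d : σ →₀ ℕ), α ≠ 0 ∧ a = MvPolynomial.monomial d α) ↔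
      ∀ b : MvPolynomial σ F, b ∣ a → ¬ IsUnit b → ∃ x : σ, MvPolynomial.X x ∣ b := by
  simp_rw [← isUnit_iff_ne_zero]
  constructor
  · rintro ⟨α, d, hα, rfl⟩ b
    exact exists_X_dvd_of_dvd_monomial hα
  · intro H
    refine exists_monomial_of_forall_X_dvd ?_ H
    rintro rfl
    obtain ⟨x₀⟩ := ‹Nonempty σ›
    obtain ⟨y, hy⟩ := H (X x₀ + 1) (dvd_zero _) (not_isUnit_X_add_one x₀)
    exact not_X_dvd_X_add_one x₀ y hy
end

section
/- Let K be a field and let A be the maximal ring of scalars of the free unital associative algebra A_K(X) with |X| ≥ 2. Concretely: if φ : A_K(X) → A_K(X) is an additive endomorphism satisfying φ(uv) = φ(u)v = uφ(v) for all u, v ∈ A_K(X), then there exists α ∈ K such that φ(a) = αa for all a ∈ A_K(X). -/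
/-!
From `φ(uv) = φ(u)v = uφ(v)` one gets `φ a = φ 1 * a` with `φ 1` central, so it suffices that the
center of `A_K(X) ≃ K[X*]` is `K`. For a central `d` and a word `w ≠ 1`, pick a letter `x` other
than the first letter of `w`: the coefficient of `w x` in `d x` is `d(w)`, while no word of `x d`
equals `w x`, so `d(w) = 0`.
-/

namespace FreeMonoid

theorem exists_forall_of_mul_ne_mul_of {X : Type*} [Nontrivial X] {w : FreeMonoid X}
    (hw : w ≠ 1) : ∃ x : X, ∀ u, of x * u ≠ w * of x := by
  cases w using FreeMonoid.casesOn with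
  | one => exact absurd rfl hw
  | of_mul a w =>
    obtain ⟨x, hxa⟩ := exists_ne a
    refine ⟨x, fun u hu => hxa ?_⟩
    simpa using congrArg (fun v => (toList v).head?) hu

end FreeMonoid

namespace MonoidAlgebra

variable {R X : Type*}

theorem coeff_eq_zero_of_forall_commute [Semiring R] [Nontrivial X]
    {d : MonoidAlgebra R (FreeMonoid X)} (hd : ∀ u, Commute d u) {w : FreeMonoid X}
    (hw : w ≠ 1) : d.coeff w = 0 := by
  obtain ⟨x, hx⟩ := FreeMonoid.exists_forall_of_mul_ne_mul_of hw
  have := congrArg (coeff · (w * .of x)) (hd (single (.of x) 1)).eq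
  rwa [coeff_mul_single_eq_coeff_mul w (fun _ _ => mul_left_inj _),
    coeff_single_mul_of_forall_mul_ne _ _ hx, mul_one] at this

theorem center_freeMonoid_eq_bot [CommSemiring R] [Nontrivial X] :
    Subalgebra.center R (MonoidAlgebra R (FreeMonoid X)) = ⊥ := by
  refine eq_bot_iff.mpr fun d hd => Algebra.mem_bot.mpr ⟨d.coeff 1, ?_⟩
  ext w
  obtain rfl | hw := eq_or_ne w 1
  · simp
  · rw [coeff_eq_zero_of_forall_commute (fun u => (Subalgebra.mem_center_iff.mp hd u).symm) hw]
    simp [coeff_single, hw.symm]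

end MonoidAlgebra

theorem FreeAlgebra.center_eq_bot {R X : Type*} [CommSemiring R] [Nontrivial X] :
    Subalgebra.center R (FreeAlgebra R X) = ⊥ := by
  set e := FreeAlgebra.equivMonoidAlgebraFreeMonoid (R := R) (X := X)
  refine eq_bot_iff.mpr fun c hc => Algebra.mem_bot.mpr ?_
  have hec : e c ∈ Subalgebra.center R (MonoidAlgebra R (FreeMonoid X)) :=
    Subalgebra.mem_center_iff.mpr fun u => by
      simpa using congrArg e (Subalgebra.mem_center_iff.mp hc (e.symm u))
  rw [MonoidAlgebra.center_freeMonoid_eq_bot] at hec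
  obtain ⟨r, hr⟩ := Algebra.mem_bot.mp hec
  exact ⟨r, e.injective (by rw [AlgEquiv.commutes, hr])⟩

/-- Maximal ring of scalars of the free associative algebra: if `|X| ≥ 2` and
`φ : A_K(X) → A_K(X)` is an additive endomorphism with `φ(uv) = φ(u)v = uφ(v)`
for all `u, v`, then `φ` is multiplication by some scalar `α ∈ K`. -/
theorem freeAlgebra_maximal_ring_of_scalars {K X : Type*} [Field K]
    (hX : ∃ x y : X, x ≠ y)
    (φ : FreeAlgebra K X →+ FreeAlgebra K X)
    (h1 : ∀ u v : FreeAlgebra K X, φ (u * v) = φ u * v)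
    (h2 : ∀ u v : FreeAlgebra K X, φ (u * v) = u * φ v) :
    ∃ α : K, ∀ a : FreeAlgebra K X, φ a = α • a := by
  have : Nontrivial X := nontrivial_iff.mpr hX
  have hcentral : φ 1 ∈ Subalgebra.center K (FreeAlgebra K X) :=
    Subalgebra.mem_center_iff.mpr fun u => by rw [← h2, ← h1, mul_one, one_mul]
  rw [FreeAlgebra.center_eq_bot] at hcentral
  obtain ⟨α, hα⟩ := Algebra.mem_bot.mp hcentral
  exact ⟨α, fun a => by simpa [← hα, Algebra.smul_def] using h1 1 a⟩
end

section
/- Let K be a field and X a finite set with |X| = r. In the non-unital free associative algebra A = A⁰_K(X), the n-th power ideal Aⁿ has width at most rⁿ: every element of Aⁿ is a sum of at most rⁿ products of n elements of A. -/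
/-- The set of products of `n` elements (`n ≥ 1`) in a non-unital multiplicative
structure: left-associated products `a₁a₂⋯aₙ`. -/
def nFoldProducts (A : Type*) [Mul A] (n : ℕ) : Set A :=
  {y | ∃ (a : A) (l : List A), l.length + 1 = n ∧ y = l.foldl (· * ·) a}

/-! An element of the additive closure of the `n`-fold products is supported on words of length
at least `n`. Conversely, if `x` is supported on words of length at least `n + 1`, sorting its
words by their first letter gives `x = ∑ c, c * x_c`, where the left quotient `x_c` is supported on
words of length at least `n`. By induction on `n`, `x` is then a sum of at most `rⁿ` products of
`n + 1` factors, each of the form `c₁ * ⋯ * cₙ * y`; so `Aⁿ` even has width at most `rⁿ⁻¹`. -/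

open scoped Pointwise

section nFoldProducts

variable {M : Type*} [Semigroup M]

@[simp]
lemma nFoldProducts_one : nFoldProducts M 1 = Set.univ :=
  Set.eq_univ_of_forall fun a => ⟨a, [], rfl, rfl⟩

lemma nFoldProducts_add_two (n : ℕ) :
    nFoldProducts M (n + 2) = Set.univ * nFoldProducts M (n + 1) := by
  ext y
  simp only [Set.mem_mul, Set.mem_univ, true_and]
  constructor
  · rintro ⟨a, _ | ⟨b, l⟩, hl, rfl⟩
    · simp at hl
    · exact ⟨a, _, ⟨b, l, by simpa using hl, rfl⟩, List.foldl_assoc.symm⟩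
  · rintro ⟨a, _, ⟨b, l, hl, rfl⟩, rfl⟩
    exact ⟨a, b :: l, by simp [hl], List.foldl_assoc.symm⟩

end nFoldProducts

namespace FreeSemigroup

variable {X : Type*}

lemma of_mul_injective (c : X) : Function.Injective (of c * ·) := fun v w h => by
  have := congrArg tail h
  simp only [tail_mul, of_tail, List.nil_append, List.cons.injEq] at this
  exact FreeSemigroup.ext this.1 this.2

lemma length_pos (w : FreeSemigroup X) : 0 < w.length := Nat.succ_pos _

end FreeSemigroup

namespace MonoidAlgebra

open FreeSemigroup

variable {R X : Type*} [Semiring R]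

variable (R) in
noncomputable def lengthFiltration (n : ℕ) : Submodule R R[FreeSemigroup X] :=
  supported R R {w | n ≤ w.length}

lemma mem_lengthFiltration {n : ℕ} {x : R[FreeSemigroup X]} :
    x ∈ lengthFiltration R n ↔ ∀ w ∈ x.coeff.support, n ≤ w.length :=
  mem_supported

lemma mul_mem_lengthFiltration_succ {n : ℕ} (b : R[FreeSemigroup X]) {a : R[FreeSemigroup X]}
    (ha : a ∈ lengthFiltration R n) : b * a ∈ lengthFiltration R (n + 1) := by
  classical
  rw [mem_lengthFiltration] at ha ⊢
  intro w hw
  obtain ⟨u, -, v, hv, rfl⟩ := Finset.mem_mul.mp (support_coeff_mul_subset b a hw)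
  rw [length_mul]
  linarith [ha v hv, u.length_pos]

lemma mem_lengthFiltration_of_mem_nFoldProducts {n : ℕ} {x : R[FreeSemigroup X]}
    (hx : x ∈ nFoldProducts R[FreeSemigroup X] (n + 1)) : x ∈ lengthFiltration R (n + 1) := by
  induction n generalizing x with
  | zero => exact mem_lengthFiltration.mpr fun w _ => w.length_pos
  | succ n ih =>
    rw [nFoldProducts_add_two] at hx
    obtain ⟨b, -, a, ha, rfl⟩ := hx
    exact mul_mem_lengthFiltration_succ b (ih ha)

noncomputable def leftQuotient (c : X) : R[FreeSemigroup X] → R[FreeSemigroup X] :=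
  comapDomain (FreeSemigroup.of c * ·) (of_mul_injective c)

lemma coeff_leftQuotient (c : X) (x : R[FreeSemigroup X]) (w : FreeSemigroup X) :
    (leftQuotient c x).coeff w = x.coeff (FreeSemigroup.of c * w) := by
  simp [leftQuotient, coeff_comapDomain]

lemma leftQuotient_mem_lengthFiltration {n : ℕ} (c : X) {x : R[FreeSemigroup X]}
    (hx : x ∈ lengthFiltration R (n + 1)) : leftQuotient c x ∈ lengthFiltration R n := by
  rw [mem_lengthFiltration] at hx ⊢
  intro w hw
  rw [Finsupp.mem_support_iff, coeff_leftQuotient, ← Finsupp.mem_support_iff] at hw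
  simpa [add_comm] using hx _ hw

lemma sum_single_mul_leftQuotient [Fintype X] {x : R[FreeSemigroup X]}
    (hx : x ∈ lengthFiltration R 2) :
    ∑ c, single (FreeSemigroup.of c) 1 * leftQuotient c x = x := by
  ext ⟨a, t⟩
  rw [coeff_sum, Finset.sum_apply']
  cases t with
  | nil =>
    have : x.coeff ⟨a, []⟩ = 0 := Finsupp.notMem_support_iff.mp fun h =>
      absurd (mem_lengthFiltration.mp hx _ h) (by simp [length])
    rw [this]
    refine Finset.sum_eq_zero fun c _ => coeff_single_mul_of_forall_mul_ne _ _ fun d h => ?_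
    simpa using congrArg tail h
  | cons b t =>
    rw [Finset.sum_eq_single a]
    · rw [coeff_single_mul_eq_mul_coeff ⟨b, t⟩, one_mul, coeff_leftQuotient]
      · rfl
      · intro m _
        exact ⟨fun h => of_mul_injective a h, fun h => h ▸ rfl⟩
    · intro c _ hc
      refine coeff_single_mul_of_forall_mul_ne _ _ fun d h => hc ?_
      simpa using congrArg head h
    · simp

lemma antitone_lengthFiltration : Antitone (lengthFiltration (X := X) R) :=
  fun _ _ h => supported_mono fun _ hw => h.trans hw

lemma exists_list_nFoldProducts_of_mem_lengthFiltration [Fintype X] (n : ℕ)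
    {x : R[FreeSemigroup X]} (hx : x ∈ lengthFiltration R (n + 1)) :
    ∃ l : List R[FreeSemigroup X], l.length ≤ Fintype.card X ^ n ∧
      (∀ y ∈ l, y ∈ nFoldProducts R[FreeSemigroup X] (n + 1)) ∧ x = l.sum := by
  induction n generalizing x with
  | zero => exact ⟨[x], by simp, by simp, by simp⟩
  | succ n ih =>
    choose L hL_length hL_mem hL_sum using
      fun c => ih (leftQuotient_mem_lengthFiltration c hx)
    refine ⟨Finset.univ.toList.flatMap fun c => (L c).map (single (FreeSemigroup.of c) 1 * ·),
      ?_, ?_, ?_⟩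
    · rw [List.length_flatMap]
      refine (List.sum_le_card_nsmul _ (Fintype.card X ^ n) ?_).trans_eq (by simp [pow_succ'])
      simpa using hL_length
    · simp only [List.mem_flatMap, List.mem_map]
      rintro _ ⟨c, -, y, hy, rfl⟩
      rw [nFoldProducts_add_two]
      exact ⟨_, trivial, y, hL_mem c y hy, rfl⟩
    · conv_lhs => rw [← sum_single_mul_leftQuotient (antitone_lengthFiltration (by omega) hx)]
      simp only [hL_sum, ← Finset.sum_map_toList, List.flatMap_def, List.sum_flatten, List.map_map,
        Function.comp_def]
      congr 1
      refine List.map_congr_left fun c _ => ?_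
      simpa using (List.sum_map_mul_left (L c) id _).symm

end MonoidAlgebra

/-- In the free non-unital associative algebra `A = A⁰_K(X)` on a finite set `X` with
`|X| = r` (realized as the semigroup algebra of the free semigroup on `X`), the `n`-th
power ideal `Aⁿ` has width at most `rⁿ`: every element of `Aⁿ` is a sum of at most `rⁿ`
products of `n` elements of `A`. -/
theorem freeNonUnitalAlgebra_power_width_le (K X : Type*) [Field K] [Fintype X]
    (n : ℕ) (hn : 1 ≤ n) :
    ∀ x ∈ AddSubgroup.closure
        (nFoldProducts (MonoidAlgebra K (FreeSemigroup X)) n),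
      ∃ l : List (MonoidAlgebra K (FreeSemigroup X)),
        l.length ≤ (Fintype.card X) ^ n ∧
        (∀ y ∈ l, y ∈ nFoldProducts (MonoidAlgebra K (FreeSemigroup X)) n) ∧
        x = l.sum := by
  intro x hx
  obtain ⟨m, rfl⟩ := Nat.exists_eq_add_of_le' hn
  rcases isEmpty_or_nonempty X with hX | hX
  · exact ⟨[], by simp, by simp, by ext w; exact isEmptyElim w.head⟩
  have hx : x ∈ MonoidAlgebra.lengthFiltration K (m + 1) :=
    (AddSubgroup.closure_le (MonoidAlgebra.lengthFiltration K (m + 1)).toAddSubgroup).mpr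
      (fun _ => MonoidAlgebra.mem_lengthFiltration_of_mem_nFoldProducts) hx
  obtain ⟨l, hl_length, hl_mem, rfl⟩ :=
    MonoidAlgebra.exists_list_nFoldProducts_of_mem_lengthFiltration m hx
  exact ⟨l, hl_length.trans (Nat.pow_le_pow_right Fintype.card_pos m.le_succ), hl_mem, rfl⟩
end

section
/- Let K be a field, X a set with |X| ≥ 2, containing distinct elements x₁, x₂. For each m ∈ ℕ define the monomial a_m = x₁x₂ x₁x₂² x₁x₂³ ⋯ x₁x₂ᵐ in the free monoid on X. Then a_m is not a proper power, and a_m is not of the form w₁w₂w₁ for nonempty words w₁, w₂. -/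
/-- The word `a_m = x₁x₂ x₁x₂² x₁x₂³ ⋯ x₁x₂ᵐ` in the free monoid. -/
def aWord {X : Type*} (x₁ x₂ : X) (m : ℕ) : FreeMonoid X :=
  ((List.range m).map fun j => FreeMonoid.of x₁ * (FreeMonoid.of x₂) ^ (j + 1)).prod

/-!
The block `x₂ᵐ` occurs in `a_m` only at its very end: an earlier occurrence would have to be
followed by the final block `x₁x₂ᵐ`, and cancelling that block gives an earlier occurrence of
`x₂^(m-1)` followed by a nonempty word in `a_{m-1}`. Consequently `a_m` is unbordered: a nonempty
word that is both a prefix and a suffix of `a_m` starts with `x₁`, so as a suffix it is longer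
than `x₂ᵐ` and ends with `x₂ᵐ`, and as a prefix it must then exhaust `a_m`. Both a proper power
`wᵏ` and a sandwich `w₁w₂w₁` have a proper nonempty border.
-/

theorem List.cons_replicate_suffix_of_replicate_append_suffix {α : Type*} {x y : α} {k : ℕ}
    {l v : List α} (hxy : y ≠ x) (h : replicate k x ++ v <:+ l ++ y :: replicate k x)
    (hv : v ≠ []) : y :: replicate k x <:+ v := by
  have hv₀ : 0 < v.length := length_pos_iff.mpr hv
  have hy : y :: replicate k x <:+ replicate k x ++ v :=
    suffix_of_suffix_length_le (suffix_append _ _) h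
      (by simp only [length_cons, length_append, length_replicate]; omega)
  by_cases hlen : k + 1 ≤ v.length
  · exact suffix_of_suffix_length_le hy (suffix_append _ _) (by simpa using hlen)
  · have hvy : v <:+ y :: replicate k x :=
      suffix_of_suffix_length_le (suffix_append _ _) hy
        (by simp only [length_cons, length_replicate]; omega)
    have hvx : v <:+ replicate k x :=
      suffix_of_suffix_length_le hvy (suffix_cons _ _) (by simp only [length_replicate]; omega)
    have hmem : y ∈ replicate k x ++ v := hy.subset mem_cons_self
    rcases mem_append.mp hmem with hy' | hy'
    · exact absurd (eq_of_mem_replicate hy') hxy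
    · exact absurd (eq_of_mem_replicate (hvx.subset hy')) hxy

section aWord

variable {X : Type*} {x₁ x₂ : X}

theorem FreeMonoid.toList_of_pow (x : X) (n : ℕ) :
    (FreeMonoid.of x ^ n).toList = List.replicate n x := by
  induction n with
  | zero => rfl
  | succ n ih =>
    rw [pow_succ, FreeMonoid.toList_mul, ih, FreeMonoid.toList_of, List.replicate_succ']

@[simp]
theorem toList_aWord_zero : (aWord x₁ x₂ 0).toList = [] := rfl

theorem toList_aWord_succ (m : ℕ) :
    (aWord x₁ x₂ (m + 1)).toList =
      (aWord x₁ x₂ m).toList ++ x₁ :: List.replicate (m + 1) x₂ := by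
  simp [aWord, List.range_succ, FreeMonoid.toList_of_pow]

theorem singleton_prefix_toList_aWord_succ (m : ℕ) :
    [x₁] <+: (aWord x₁ x₂ (m + 1)).toList := by
  induction m with
  | zero => simp [toList_aWord_succ]
  | succ m ih => exact ih.trans ⟨_, (toList_aWord_succ _).symm⟩

theorem eq_nil_of_replicate_append_suffix_toList_aWord (hx : x₁ ≠ x₂) {m : ℕ} {v : List X}
    (h : List.replicate m x₂ ++ v <:+ (aWord x₁ x₂ m).toList) : v = [] := by
  induction m generalizing v with
  | zero => simpa using h
  | succ n ih =>
    rw [toList_aWord_succ] at h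
    by_contra hv
    obtain ⟨v₀, rfl⟩ := List.cons_replicate_suffix_of_replicate_append_suffix hx h hv
    rw [← List.append_assoc, List.suffix_append_self_iff, List.replicate_succ',
      List.append_assoc, List.singleton_append] at h
    exact List.cons_ne_nil _ _ (ih h)

theorem eq_nil_of_toList_aWord_eq_append_of_suffix (hx : x₁ ≠ x₂) {m : ℕ} {w u : List X}
    (hw : w ≠ []) (hu : (aWord x₁ x₂ m).toList = w ++ u)
    (hsuf : w <:+ (aWord x₁ x₂ m).toList) : u = [] := by
  cases m with
  | zero => simp_all
  | succ n =>
    have hrep : List.replicate (n + 1) x₂ <:+ (aWord x₁ x₂ (n + 1)).toList := by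
      rw [toList_aWord_succ]; exact List.suffix_append_of_suffix (List.suffix_cons _ _)
    rcases le_or_gt w.length (n + 1) with hlen | hlen
    · have hx₁ : x₁ ∈ w := by
        have := List.prefix_of_prefix_length_le (singleton_prefix_toList_aWord_succ n)
          ⟨u, hu.symm⟩ (List.length_pos_iff.mpr hw)
        exact this.subset (List.mem_singleton_self x₁)
      exact absurd (List.eq_of_mem_replicate
        ((List.suffix_of_suffix_length_le hsuf hrep (by simpa using hlen)).subset hx₁)) hx
    · obtain ⟨p, rfl⟩ := List.suffix_of_suffix_length_le hrep hsuf
        (by simp only [List.length_replicate]; omega)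
      refine eq_nil_of_replicate_append_suffix_toList_aWord (m := n + 1) hx ?_
      rw [hu, List.append_assoc]
      exact List.suffix_append _ _

theorem eq_one_of_aWord_eq_mul_of_aWord_eq_mul (hx : x₁ ≠ x₂) {m : ℕ} {w u v : FreeMonoid X}
    (hw : w ≠ 1) (hu : aWord x₁ x₂ m = w * u) (hv : aWord x₁ x₂ m = v * w) : u = 1 :=
  FreeMonoid.toList.injective <| eq_nil_of_toList_aWord_eq_append_of_suffix (w := w.toList) hx hw
    (by rw [hu, FreeMonoid.toList_mul]) ⟨v.toList, by rw [hv, FreeMonoid.toList_mul]⟩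

end aWord

/-- For distinct `x₁, x₂`, the word `a_m = x₁x₂x₁x₂²⋯x₁x₂ᵐ` is not a proper power
(`wᵏ` with `w` nonempty and `k ≥ 2`) and is not of the form `w₁w₂w₁` with `w₁, w₂`
nonempty. -/
theorem aWord_not_properPower_not_sandwich {X : Type*} (x₁ x₂ : X) (hx : x₁ ≠ x₂)
    (m : ℕ) :
    (¬ ∃ (w : FreeMonoid X) (k : ℕ), w ≠ 1 ∧ 2 ≤ k ∧ aWord x₁ x₂ m = w ^ k) ∧
    (¬ ∃ w₁ w₂ : FreeMonoid X, w₁ ≠ 1 ∧ w₂ ≠ 1 ∧ aWord x₁ x₂ m = w₁ * w₂ * w₁) := by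
  constructor
  · rintro ⟨w, k, hw, hk, h⟩
    obtain ⟨j, rfl⟩ : ∃ j, k = j + 2 := ⟨k - 2, by omega⟩
    have h₁ : w ^ (j + 1) = 1 := eq_one_of_aWord_eq_mul_of_aWord_eq_mul hx hw
      (by rw [h, pow_succ' w (j + 1)]) (by rw [h, pow_succ w (j + 1)])
    rw [pow_succ] at h₁
    exact hw (eq_one_of_mul_left' h₁)
  · rintro ⟨w₁, w₂, hw₁, hw₂, h⟩
    have h₁ : w₂ * w₁ = 1 :=
      eq_one_of_aWord_eq_mul_of_aWord_eq_mul hx hw₁ (by rw [h, mul_assoc]) h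
    exact hw₂ (eq_one_of_mul_right' h₁)
end
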